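/- arXiv:0912.5247 — 6 statements merged into one kernel-verified Lean document; each statement's English description precedes it below -/
import Mathlib

section
/- Let f : ℝ² → ℝ be nonnegative and integrable. Define k = ∫ f(v) sqrt(1+|v|²) dv and σ = ∫ f(v) (sqrt(1+|v|²) - v1) dv. Then there is an absolute constant C (independent of f) such that ∫ f(v) dv ≤ C * sqrt(k * σ). -/
/-!
Writing `g v = √(1 + |v|²)`, one has `g v * (g v - v₁) ≥ 1/2` for every `v`, hence pointwise
`f ≤ √2 · √(f g) · √(f (g - v₁))`, and the Cauchy–Schwarz inequality bounds the integral of the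
right-hand side by `√2 · √(k σ)`.
-/

open MeasureTheory

section CauchySchwarz

variable {α : Type*} [MeasurableSpace α] {μ : Measure α} {F G : α → ℝ}

theorem memLp_two_sqrt (hF0 : 0 ≤ F) (hF : Integrable F μ) :
    MemLp (fun x => √(F x)) 2 μ := by
  refine (memLp_two_iff_integrable_sq
    (Real.continuous_sqrt.comp_aestronglyMeasurable hF.aestronglyMeasurable)).2 ?_
  simpa only [Real.sq_sqrt (hF0 _)] using hF

theorem integrable_sqrt_mul_sqrt (hF0 : 0 ≤ F) (hG0 : 0 ≤ G)
    (hF : Integrable F μ) (hG : Integrable G μ) :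
    Integrable (fun x => √(F x) * √(G x)) μ :=
  (memLp_two_sqrt hF0 hF).integrable_mul (memLp_two_sqrt hG0 hG)

theorem integral_sqrt_mul_sqrt_le (hF0 : 0 ≤ F) (hG0 : 0 ≤ G)
    (hF : Integrable F μ) (hG : Integrable G μ) :
    ∫ x, √(F x) * √(G x) ∂μ ≤ √((∫ x, F x ∂μ) * ∫ x, G x ∂μ) := by
  have hsq : ∀ H : α → ℝ, 0 ≤ H → ∫ x, √(H x) ^ (2 : ℝ) ∂μ = ∫ x, H x ∂μ := fun H hH0 => by
    simp only [Real.rpow_two, Real.sq_sqrt (hH0 _)]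
  have h := integral_mul_le_Lp_mul_Lq_of_nonneg Real.HolderConjugate.two_two
    (.of_forall fun x => Real.sqrt_nonneg (F x)) (.of_forall fun x => Real.sqrt_nonneg (G x))
    (by simpa using memLp_two_sqrt hF0 hF) (by simpa using memLp_two_sqrt hG0 hG)
  rwa [hsq F hF0, hsq G hG0, ← Real.sqrt_eq_rpow, ← Real.sqrt_eq_rpow,
    ← Real.sqrt_mul (integral_nonneg hF0)] at h

theorem integral_le_sqrt_mul_integral_mul_weights {f g h : α → ℝ} {c : ℝ} (hc : 0 < c)
    (hf0 : 0 ≤ f) (hg0 : 0 ≤ g) (hh0 : 0 ≤ h) (hgh : ∀ x, c ≤ g x * h x)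
    (hfg : Integrable (fun x => f x * g x) μ) (hfh : Integrable (fun x => f x * h x) μ) :
    ∫ x, f x ∂μ ≤ √c⁻¹ * √((∫ x, f x * g x ∂μ) * ∫ x, f x * h x ∂μ) := by
  have hfg0 : 0 ≤ fun x => f x * g x := fun x => mul_nonneg (hf0 x) (hg0 x)
  have hfh0 : 0 ≤ fun x => f x * h x := fun x => mul_nonneg (hf0 x) (hh0 x)
  have hpointwise : ∀ x, f x ≤ √c⁻¹ * (√(f x * g x) * √(f x * h x)) := fun x => by
    rw [← Real.sqrt_mul (hfg0 x), ← Real.sqrt_mul (inv_nonneg.2 hc.le)]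
    refine Real.le_sqrt_of_sq_le ?_
    calc f x ^ 2 = c⁻¹ * f x ^ 2 * c := by field_simp
      _ ≤ c⁻¹ * f x ^ 2 * (g x * h x) := by gcongr; exact hgh x
      _ = c⁻¹ * (f x * g x * (f x * h x)) := by ring
  calc ∫ x, f x ∂μ ≤ ∫ x, √c⁻¹ * (√(f x * g x) * √(f x * h x)) ∂μ :=
        integral_mono_of_nonneg (.of_forall hf0)
          ((integrable_sqrt_mul_sqrt hfg0 hfh0 hfg hfh).const_mul _) (.of_forall hpointwise)
    _ = √c⁻¹ * ∫ x, √(f x * g x) * √(f x * h x) ∂μ := integral_const_mul _ _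
    _ ≤ _ := by gcongr; exact integral_sqrt_mul_sqrt_le hfg0 hfh0 hfg hfh

end CauchySchwarz

theorem abs_le_sqrt_one_add_sq_add_sq (x y : ℝ) : |x| ≤ √(1 + x ^ 2 + y ^ 2) :=
  Real.abs_le_sqrt (by nlinarith [sq_nonneg y])

theorem sqrt_one_add_sq_add_sq_sub_nonneg (x y : ℝ) : 0 ≤ √(1 + x ^ 2 + y ^ 2) - x :=
  sub_nonneg.2 ((le_abs_self x).trans (abs_le_sqrt_one_add_sq_add_sq x y))

theorem half_le_sqrt_one_add_sq_add_sq_mul_sub (x y : ℝ) :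
    2⁻¹ ≤ √(1 + x ^ 2 + y ^ 2) * (√(1 + x ^ 2 + y ^ 2) - x) := by
  -- `(g - x)² ≥ 0` gives `g x ≤ (g² + x²) / 2`, so `g (g - x) ≥ (1 + y²) / 2`.
  have hsq : √(1 + x ^ 2 + y ^ 2) ^ 2 = 1 + x ^ 2 + y ^ 2 := Real.sq_sqrt (by positivity)
  nlinarith [sq_nonneg (√(1 + x ^ 2 + y ^ 2) - x), sq_nonneg y]

theorem stmt2 :
    ∃ C > 0, ∀ f : ℝ × ℝ → ℝ,
      (∀ v, 0 ≤ f v) →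
      Integrable f →
      Integrable (fun v : ℝ × ℝ => f v * Real.sqrt (1 + v.1^2 + v.2^2)) →
      (∫ v : ℝ × ℝ, f v) ≤
        C * Real.sqrt ((∫ v : ℝ × ℝ, f v * Real.sqrt (1 + v.1^2 + v.2^2)) *
          (∫ v : ℝ × ℝ, f v * (Real.sqrt (1 + v.1^2 + v.2^2) - v.1))) := by
  refine ⟨√2, by positivity, fun f hf0 hf hfg => ?_⟩
  have hfv : Integrable (fun v : ℝ × ℝ => f v * v.1) := by
    refine hfg.mono (hf.aestronglyMeasurable.mul measurable_fst.aestronglyMeasurable)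
      (.of_forall fun v => ?_)
    simp only [norm_mul, Real.norm_of_nonneg (hf0 v), Real.norm_of_nonneg (Real.sqrt_nonneg _),
      Real.norm_eq_abs]
    exact mul_le_mul_of_nonneg_left (abs_le_sqrt_one_add_sq_add_sq _ _) (hf0 v)
  have hfh : Integrable (fun v : ℝ × ℝ => f v * (√(1 + v.1 ^ 2 + v.2 ^ 2) - v.1)) := by
    simpa only [mul_sub, Pi.sub_def] using hfg.sub hfv
  simpa only [inv_inv] using integral_le_sqrt_mul_integral_mul_weights (by norm_num) hf0
    (fun _ => Real.sqrt_nonneg _) (fun v => sqrt_one_add_sq_add_sq_sub_nonneg v.1 v.2)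
    (fun v => half_le_sqrt_one_add_sq_add_sq_mul_sub v.1 v.2) hfg hfh
end

section
/- Suppose X : [0,∞) → ℝ is differentiable with X' (t) = v̂1(t) where v̂1(t) = V1(t)/sqrt(1+V1(t)²+V2(t)²) and |V1(t)| ≤ C(1 + t^{1/2}) for some C > 0, and X(0) = x. If moreover X(t) ≥ x0 + t for all t ≥ 0 (for some x0), then for all t ≥ 0, ∫_0^t (1 - v̂1(s)) ds ≤ x - x0, while also 1 - v̂1(s) ≥ c/(1+s) for some c > 0; hence c·ln(1+t) ≤ x - x0 for all t, a contradiction for large t. -/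
/-!
Along the characteristic, `X' = v̂₁` and `X t ≥ x0 + t`, so the integral of `1 - v̂₁` over `[0, t]`
is `t - X t + X 0 ≤ x - x0`, uniformly in `t`. On the other hand
`1 - v̂₁ = (1 + V₂²) / (r (r + V₁))` with `r = √(1 + V₁² + V₂²)`, and `r (r + V₁) ≤ 2 r² ≤ 2 (1 + V₁²)(1 + V₂²)`,
so `1 - v̂₁ ≥ 1 / (2 (1 + V₁²))`, which the growth bound `|V₁| ≲ 1 + √t` turns into `c / (1 + t)`.
Integrating gives `c log (1 + t) ≤ x - x0` for all `t`, which is absurd.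
-/

open MeasureTheory intervalIntegral Set Filter Real

lemma intervalIntegrable_of_hasDerivAt_of_nonneg {f f' : ℝ → ℝ} {a b : ℝ}
    (hderiv : ∀ x ∈ uIcc a b, HasDerivAt f (f' x) x) (hnonneg : ∀ x ∈ uIcc a b, 0 ≤ f' x) :
    IntervalIntegrable f' volume a b :=
  intervalIntegrable_deriv_of_nonneg (fun x hx => (hderiv x hx).continuousAt.continuousWithinAt)
    (fun x hx => hderiv x (Ioo_subset_Icc_self hx)) (fun x hx => hnonneg x (Ioo_subset_Icc_self hx))

lemma integral_div_one_add {t : ℝ} (c : ℝ) (ht : -1 < t) :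
    ∫ s in (0:ℝ)..t, c / (1 + s) = c * log (1 + t) := by
  simp_rw [div_eq_mul_inv, intervalIntegral.integral_const_mul,
    integral_comp_add_left (fun s => s⁻¹), add_zero]
  rw [integral_inv_of_pos one_pos (by linarith), div_one]

lemma not_forall_mul_log_one_add_le {c : ℝ} (K : ℝ) (hc : 0 < c) :
    ¬ ∀ t ≥ (0:ℝ), c * log (1 + t) ≤ K := by
  intro h
  have hlog : Tendsto (fun t => c * log (1 + t)) atTop atTop :=
    (tendsto_log_atTop.comp (tendsto_atTop_add_const_left _ 1 tendsto_id)).const_mul_atTop hc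
  obtain ⟨t, hKt, ht⟩ := ((hlog.eventually_gt_atTop K).and (eventually_ge_atTop 0)).exists
  exact (h t ht).not_gt hKt

lemma one_div_two_mul_one_add_sq_le_one_sub_div_sqrt (v w : ℝ) :
    1 / (2 * (1 + v ^ 2)) ≤ 1 - v / √(1 + v ^ 2 + w ^ 2) := by
  set r := √(1 + v ^ 2 + w ^ 2)
  have hr2 : r ^ 2 = 1 + v ^ 2 + w ^ 2 := sq_sqrt (by positivity)
  have hr : 0 < r := sqrt_pos.mpr (by positivity)
  have hvr : |v| < r := abs_lt_of_sq_lt_sq (by nlinarith [sq_nonneg w]) hr.le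
  have hrv : 0 < r + v := by linarith [neg_abs_le v]
  have hidentity : 1 - v / r = (1 + w ^ 2) / (r * (r + v)) := by
    field_simp
    nlinarith
  have hden : r * (r + v) ≤ 2 * (1 + v ^ 2) * (1 + w ^ 2) := by
    nlinarith [le_abs_self v, sq_nonneg (v * w)]
  rw [hidentity, div_le_div_iff₀ (by positivity) (by positivity)]
  nlinarith [sq_nonneg w]

lemma one_add_sq_le_of_abs_le_mul_one_add_sqrt {v C s : ℝ} (hs : 0 ≤ s)
    (hv : |v| ≤ C * (1 + √s)) : 1 + v ^ 2 ≤ (1 + 2 * C ^ 2) * (1 + s) := by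
  have hsq : √s ^ 2 = s := sq_sqrt hs
  have hv2 : v ^ 2 ≤ (C * (1 + √s)) ^ 2 := sq_abs v ▸ pow_le_pow_left₀ (abs_nonneg v) hv 2
  nlinarith [sq_nonneg (√s - 1), sq_nonneg C]

section Characteristic

variable {X g : ℝ → ℝ} {t : ℝ}

lemma intervalIntegrable_one_sub_of_hasDerivAt (hX : ∀ s ≥ (0:ℝ), HasDerivAt X (g s) s)
    (hg : ∀ s ≥ (0:ℝ), g s ≤ 1) (ht : 0 ≤ t) :
    IntervalIntegrable (fun s => 1 - g s) volume 0 t :=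
  intervalIntegrable_of_hasDerivAt_of_nonneg (f := fun s => s - X s)
    (fun s hs => (hasDerivAt_id s).sub (hX s (uIcc_of_le ht ▸ hs).1))
    (fun s hs => sub_nonneg.mpr (hg s (uIcc_of_le ht ▸ hs).1))

lemma integral_one_sub_eq_of_hasDerivAt (hX : ∀ s ≥ (0:ℝ), HasDerivAt X (g s) s)
    (hg : ∀ s ≥ (0:ℝ), g s ≤ 1) (ht : 0 ≤ t) :
    ∫ s in (0:ℝ)..t, (1 - g s) = t - X t + X 0 := by
  rw [integral_eq_sub_of_hasDerivAt (f := fun s => s - X s)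
    (fun s hs => (hasDerivAt_id s).sub (hX s (uIcc_of_le ht ▸ hs).1))
    (intervalIntegrable_one_sub_of_hasDerivAt hX hg ht)]
  ring

end Characteristic

theorem stmt6_general (X V1 V2 : ℝ → ℝ) (C x x0 : ℝ)
    (hX : ∀ t ≥ (0:ℝ),
      HasDerivAt X (V1 t / Real.sqrt (1 + (V1 t)^2 + (V2 t)^2)) t)
    (hV1 : ∀ t ≥ (0:ℝ), |V1 t| ≤ C * (1 + t ^ ((1:ℝ)/2)))
    (hX0 : X 0 = x)
    (hsupp : ∀ t ≥ (0:ℝ), x0 + t ≤ X t) :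
    (∀ t ≥ (0:ℝ),
        (∫ s in (0:ℝ)..t, (1 - V1 s / Real.sqrt (1 + (V1 s)^2 + (V2 s)^2))) ≤ x - x0) ∧
    (∃ c > 0, (∀ s ≥ (0:ℝ),
        c / (1 + s) ≤ 1 - V1 s / Real.sqrt (1 + (V1 s)^2 + (V2 s)^2)) ∧
      ∀ t ≥ (0:ℝ), c * Real.log (1 + t) ≤ x - x0) ∧
    False := by
  set c : ℝ := 1 / (2 * (1 + 2 * C ^ 2))
  have hc : 0 < c := by positivity
  have hlower : ∀ s ≥ (0:ℝ), c / (1 + s) ≤ 1 - V1 s / √(1 + V1 s ^ 2 + V2 s ^ 2) := by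
    intro s hs
    have hV := one_add_sq_le_of_abs_le_mul_one_add_sqrt hs (sqrt_eq_rpow s ▸ hV1 s hs)
    refine le_trans ?_ (one_div_two_mul_one_add_sq_le_one_sub_div_sqrt _ _)
    rw [div_div, one_div_le_one_div (by positivity) (by positivity)]
    nlinarith
  have hle_one : ∀ s ≥ (0:ℝ), V1 s / √(1 + V1 s ^ 2 + V2 s ^ 2) ≤ 1 := fun s hs =>
    sub_nonneg.mp ((div_nonneg hc.le (by linarith)).trans (hlower s hs))
  have hintegral : ∀ t ≥ (0:ℝ),
      ∫ s in (0:ℝ)..t, (1 - V1 s / √(1 + V1 s ^ 2 + V2 s ^ 2)) ≤ x - x0 := fun t ht => by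
    linarith [integral_one_sub_eq_of_hasDerivAt hX hle_one ht, hsupp t ht]
  have hlog : ∀ t ≥ (0:ℝ), c * log (1 + t) ≤ x - x0 := by
    intro t ht
    have hcont : ContinuousOn (fun s => c / (1 + s)) (uIcc 0 t) :=
      continuousOn_const.div (by fun_prop) fun s hs => by linarith [(uIcc_of_le ht ▸ hs).1]
    rw [← integral_div_one_add c (by linarith)]
    exact (integral_mono_on ht hcont.intervalIntegrable
      (intervalIntegrable_one_sub_of_hasDerivAt hX hle_one ht)
      fun s hs => hlower s hs.1).trans (hintegral t ht)
  exact ⟨hintegral, ⟨c, hc, hlower, hlog⟩, not_forall_mul_log_one_add_le _ hc hlog⟩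

theorem stmt6 (X V1 V2 : ℝ → ℝ) (C x x0 : ℝ) (hC : 0 < C)
    (hX : ∀ t ≥ (0:ℝ),
      HasDerivAt X (V1 t / Real.sqrt (1 + (V1 t)^2 + (V2 t)^2)) t)
    (hV1 : ∀ t ≥ (0:ℝ), |V1 t| ≤ C * (1 + t ^ ((1:ℝ)/2)))
    (hX0 : X 0 = x)
    (hsupp : ∀ t ≥ (0:ℝ), x0 + t ≤ X t) :
    (∀ t ≥ (0:ℝ),
        (∫ s in (0:ℝ)..t, (1 - V1 s / Real.sqrt (1 + (V1 s)^2 + (V2 s)^2))) ≤ x - x0) ∧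
    (∃ c > 0, (∀ s ≥ (0:ℝ),
        c / (1 + s) ≤ 1 - V1 s / Real.sqrt (1 + (V1 s)^2 + (V2 s)^2)) ∧
      ∀ t ≥ (0:ℝ), c * Real.log (1 + t) ≤ x - x0) ∧
    False :=
  stmt6_general X V1 V2 C x x0 hX hV1 hX0 hsupp
end

section
/- Let A : [0,∞) × ℝ → ℝ be C¹ and satisfy ∂_t A + ∂_x A = -g and ∂_t A - ∂_x A = -h for continuous g, h. Suppose |A(0,y)| ≤ C₀' for all y, and that for each (t,x), ∫_0^t g(τ, x - t + τ)² dτ ≤ K and ∫_0^t h(τ, x + t - τ)² dτ ≤ K, and g(τ, y) = 0 for |y| ≥ C₀ + τ (similarly h). Then |A(t,x)| ≤ C₀' + sqrt(K) · sqrt(min(t + x + C₀, t - x + C₀, t)) whenever |x| < C₀ + t, and |A(t,x)| ≤ C₀' otherwise. -/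
/-!
Along a characteristic `τ ↦ x + v (τ - t)` with `v = ±1`, the transport equation says that `A`
changes at rate `-G`, so `A t x - A 0 (x - v t) = -∫₀ᵗ G`. The source vanishes while the ray lies
outside the cone `|y| < C₀ + τ`; the ray enters the cone only after time `t - L`, where
`L = max 0 (min t ((t + v x + C₀) / 2))`, and Cauchy–Schwarz on the remaining stretch of length `L`
bounds the integral by `√K √L`. The `g`-ray (`v = 1`) gives the bound for `x ≤ 0`, the `h`-ray
(`v = -1`) for `x ≥ 0`, and outside the cone one of the two rays never meets the support.
-/

open MeasureTheory Set

theorem abs_integral_le_sqrt_measureReal_univ_mul_sqrt {α : Type*} [MeasurableSpace α]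
    {μ : Measure α} [IsFiniteMeasure μ] {f : α → ℝ} (hf : MemLp f 2 μ) :
    |∫ a, f a ∂μ| ≤ √(μ.real univ) * √(∫ a, f a ^ 2 ∂μ) := by
  have holder := integral_mul_norm_le_Lp_mul_Lq (μ := μ) .two_two (f := fun _ => (1 : ℝ)) (g := f)
    (by simpa using memLp_const (1 : ℝ)) (by simpa using hf)
  simp only [norm_one, one_mul, integral_const, smul_eq_mul, Real.norm_eq_abs, Real.rpow_two,
    sq_abs, one_pow, mul_one, ← Real.sqrt_eq_rpow] at holder
  exact abs_integral_le_integral_abs.trans holder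

theorem abs_intervalIntegral_le_sqrt_mul_sqrt {f : ℝ → ℝ} {a b : ℝ} (hab : a ≤ b)
    (hf : ContinuousOn f (Icc a b)) :
    |∫ τ in a..b, f τ| ≤ √(b - a) * √(∫ τ in a..b, f τ ^ 2) := by
  have hf : MemLp f 2 (volume.restrict (Icc a b)) :=
    (memLp_two_iff_integrable_sq (hf.aestronglyMeasurable measurableSet_Icc)).2
      (hf.pow 2).integrableOn_Icc
  have := abs_integral_le_sqrt_measureReal_univ_mul_sqrt
    (hf.mono_measure (Measure.restrict_mono Ioc_subset_Icc_self le_rfl))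
  simpa [intervalIntegral.integral_of_le hab, hab] using this

theorem abs_sub_le_sqrt_mul_sqrt_of_hasDerivAt {F G : ℝ → ℝ} {s a t : ℝ}
    (hF : ∀ τ ∈ Icc s t, HasDerivAt F (G τ) τ) (hG : ContinuousOn G (Icc s t))
    (hsa : s ≤ a) (hat : a ≤ t) (hzero : ∀ τ ∈ Ioo s a, G τ = 0) :
    |F t - F s| ≤ √(t - a) * √(∫ τ in s..t, G τ ^ 2) := by
  have hst : s ≤ t := hsa.trans hat
  have hint : ∀ {c d}, c ∈ Icc s t → d ∈ Icc s t → IntervalIntegrable G volume c d :=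
    fun hc hd => (hG.mono (uIcc_subset_Icc hc hd)).intervalIntegrable
  have hint2 : ∀ {c d}, c ∈ Icc s t → d ∈ Icc s t →
      IntervalIntegrable (fun τ => G τ ^ 2) volume c d :=
    fun hc hd => ((hG.pow 2).mono (uIcc_subset_Icc hc hd)).intervalIntegrable
  have hs : s ∈ Icc s t := ⟨le_rfl, hst⟩
  have ha : a ∈ Icc s t := ⟨hsa, hat⟩
  have ht : t ∈ Icc s t := ⟨hst, le_rfl⟩
  have hftc : F t - F s = ∫ τ in a..t, G τ := by
    have hsa0 : ∫ τ in s..a, G τ = 0 := by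
      rw [intervalIntegral.integral_of_le hsa, integral_Ioc_eq_integral_Ioo,
        setIntegral_congr_fun measurableSet_Ioo hzero, integral_zero]
    rw [← intervalIntegral.integral_eq_sub_of_hasDerivAt (by rwa [uIcc_of_le hst]) (hint hs ht),
      ← intervalIntegral.integral_add_adjacent_intervals (hint hs ha) (hint ha ht), hsa0, zero_add]
  have htail : ∫ τ in a..t, G τ ^ 2 ≤ ∫ τ in s..t, G τ ^ 2 := by
    rw [← intervalIntegral.integral_add_adjacent_intervals (hint2 hs ha) (hint2 ha ht)]
    exact le_add_of_nonneg_left (intervalIntegral.integral_nonneg hsa fun τ _ => sq_nonneg _)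
  rw [hftc]
  calc |∫ τ in a..t, G τ| ≤ √(t - a) * √(∫ τ in a..t, G τ ^ 2) :=
        abs_intervalIntegral_le_sqrt_mul_sqrt hat (hG.mono (Icc_subset_Icc_left hsa))
    _ ≤ √(t - a) * √(∫ τ in s..t, G τ ^ 2) := by gcongr

theorem hasDerivAt_comp_curve {A : ℝ → ℝ → ℝ} {y : ℝ → ℝ} {v τ : ℝ}
    (hA : DifferentiableAt ℝ (fun p : ℝ × ℝ => A p.1 p.2) (τ, y τ)) (hy : HasDerivAt y v τ) :
    HasDerivAt (fun s => A s (y s))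
      (deriv (fun s => A s (y τ)) τ + v * deriv (A τ) (y τ)) τ := by
  have hpartial : ∀ {c : ℝ → ℝ × ℝ} {w : ℝ × ℝ} {σ : ℝ}, c σ = (τ, y τ) → HasDerivAt c w σ →
      HasDerivAt (fun s => A (c s).1 (c s).2)
        (fderiv ℝ (fun p : ℝ × ℝ => A p.1 p.2) (τ, y τ) w) σ :=
    fun hc hcw => by rw [← hc] at hA ⊢; exact hA.hasFDerivAt.comp_hasDerivAt _ hcw
  have ht := hpartial (c := fun s => (s, y τ)) rfl
    ((hasDerivAt_id τ).prodMk (hasDerivAt_const τ _))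
  have hx := hpartial (c := fun z => (τ, z)) rfl
    ((hasDerivAt_const (y τ) τ).prodMk (hasDerivAt_id _))
  have hcurve := hpartial (c := fun s => (s, y s)) rfl ((hasDerivAt_id τ).prodMk hy)
  have hsplit : ((1 : ℝ), v) = ((1 : ℝ), (0 : ℝ)) + v • ((0 : ℝ), (1 : ℝ)) := by simp
  rw [hsplit, map_add, map_smul, smul_eq_mul] at hcurve
  simpa only [ht.deriv, hx.deriv] using hcurve

theorem abs_le_of_transport_eq {A G : ℝ → ℝ → ℝ} {v C₀ C₀' K t x : ℝ} (hv : |v| = 1)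
    (hA : Differentiable ℝ (fun p : ℝ × ℝ => A p.1 p.2))
    (hG : Continuous (fun p : ℝ × ℝ => G p.1 p.2))
    (htransport : ∀ t x, deriv (fun s => A s x) t + v * deriv (fun y => A t y) x = -G t x)
    (h0 : ∀ y, |A 0 y| ≤ C₀') (hsupp : ∀ τ ≥ 0, ∀ y, C₀ + τ ≤ |y| → G τ y = 0)
    (ht : 0 ≤ t) (hGK : ∫ τ in 0..t, G τ (x + v * (τ - t)) ^ 2 ≤ K) :
    |A t x| ≤ C₀' + √K * √(max 0 (min t ((t + v * x + C₀) / 2))) := by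
  set L := max 0 (min t ((t + v * x + C₀) / 2))
  have hL0 : 0 ≤ L := le_max_left _ _
  have hLt : L ≤ t := max_le ht (min_le_left _ _)
  have hray : ∀ τ, HasDerivAt (fun τ => A τ (x + v * (τ - t))) (-G τ (x + v * (τ - t))) τ := by
    intro τ
    have hcurve : HasDerivAt (fun τ => x + v * (τ - t)) v τ := by
      simpa using ((hasDerivAt_id τ).sub_const t).const_mul v |>.const_add x
    simpa only [htransport] using hasDerivAt_comp_curve (hA _) hcurve
  have hvanish : ∀ τ ∈ Ioo 0 (t - L), -G τ (x + v * (τ - t)) = 0 := by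
    rintro τ ⟨hτ0, hτ⟩
    have hτ' : τ + C₀ + τ < t - v * x := by
      rcases min_cases t ((t + v * x + C₀) / 2) with ⟨hmin, _⟩ | ⟨hmin, _⟩ <;>
        linarith [le_max_right 0 (min t ((t + v * x + C₀) / 2))]
    rw [neg_eq_zero]
    refine hsupp τ hτ0.le _ ?_
    have hvv : v * v = 1 := by rw [← abs_mul_abs_self v, hv, one_mul]
    calc C₀ + τ ≤ -(v * (x + v * (τ - t))) := by linear_combination (τ - t) * hvv + hτ'.le
      _ ≤ |x + v * (τ - t)| := by
          simpa [abs_mul, hv] using neg_le_abs (v * (x + v * (τ - t)))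
  have hbound := abs_sub_le_sqrt_mul_sqrt_of_hasDerivAt (s := 0) (a := t - L) (t := t)
    (fun τ _ => hray τ) (by fun_prop) (by linarith) (by linarith) hvanish
  simp only [sub_self, mul_zero, add_zero, zero_sub, sub_sub_cancel, neg_sq] at hbound
  calc |A t x| ≤ |A 0 (x + v * -t)| + |A t x - A 0 (x + v * -t)| := by
        linarith [abs_sub_abs_le_abs_sub (A t x) (A 0 (x + v * -t))]
    _ ≤ C₀' + √L * √K := add_le_add (h0 _) (hbound.trans (by gcongr))
    _ = C₀' + √K * √L := by ring

theorem stmt10_general (A g h : ℝ → ℝ → ℝ) (C₀' C₀ K : ℝ)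
    (hA : ContDiff ℝ 1 (fun p : ℝ × ℝ => A p.1 p.2))
    (hg : Continuous (fun p : ℝ × ℝ => g p.1 p.2))
    (hh : Continuous (fun p : ℝ × ℝ => h p.1 p.2))
    (pde1 : ∀ t x : ℝ, deriv (fun s => A s x) t + deriv (fun y => A t y) x = - g t x)
    (pde2 : ∀ t x : ℝ, deriv (fun s => A s x) t - deriv (fun y => A t y) x = - h t x)
    (h0 : ∀ y : ℝ, |A 0 y| ≤ C₀')
    (hgK : ∀ t ≥ (0:ℝ), ∀ x : ℝ, (∫ τ in (0:ℝ)..t, (g τ (x - t + τ))^2) ≤ K)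
    (hhK : ∀ t ≥ (0:ℝ), ∀ x : ℝ, (∫ τ in (0:ℝ)..t, (h τ (x + t - τ))^2) ≤ K)
    (hgsupp : ∀ τ ≥ (0:ℝ), ∀ y : ℝ, C₀ + τ ≤ |y| → g τ y = 0)
    (hhsupp : ∀ τ ≥ (0:ℝ), ∀ y : ℝ, C₀ + τ ≤ |y| → h τ y = 0) :
    ∀ t ≥ (0:ℝ), ∀ x : ℝ,
      (|x| < C₀ + t →
        |A t x| ≤ C₀' + Real.sqrt K * Real.sqrt (min (min (t + x + C₀) (t - x + C₀)) t)) ∧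
      (C₀ + t ≤ |x| → |A t x| ≤ C₀') := by
  have hA' := hA.differentiable one_ne_zero
  intro t ht x
  have hg_ray := abs_le_of_transport_eq (v := 1) (t := t) (x := x) abs_one hA' hg
    (by simpa using pde1) h0 hgsupp ht (by convert hgK t ht x using 5; ring)
  have hh_ray := abs_le_of_transport_eq (v := -1) (t := t) (x := x) (by simp) hA' hh
    (by simpa [sub_eq_add_neg] using pde2) h0 hhsupp ht (by convert hhK t ht x using 5; ring)
  simp only [one_mul, neg_one_mul, ← sub_eq_add_neg] at hg_ray hh_ray
  refine ⟨fun hin => ?_, fun hout => ?_⟩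
  · have hcone : ∀ c, 0 ≤ c → c ≤ t + x + C₀ → c ≤ t - x + C₀ →
        max 0 (min t (c / 2)) ≤ min (min (t + x + C₀) (t - x + C₀)) t := fun c hc h₁ h₂ =>
      max_le (le_min (le_min (hc.trans h₁) (hc.trans h₂)) ht)
        (le_min (le_min (by linarith [min_le_right t (c / 2)])
          (by linarith [min_le_right t (c / 2)])) (min_le_left _ _))
    obtain ⟨hx₁, hx₂⟩ := abs_lt.mp hin
    rcases le_total x 0 with hx | hx
    · exact hg_ray.trans (by gcongr; exact hcone _ (by linarith) le_rfl (by linarith))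
    · exact hh_ray.trans (by gcongr; exact hcone _ (by linarith) (by linarith) le_rfl)
  · have hvanish : ∀ c ≤ 0, C₀' + √K * √(max 0 (min t (c / 2))) = C₀' := fun c hc => by
      simp [max_eq_left (min_le_of_right_le (by linarith : c / 2 ≤ 0))]
    rcases abs_cases x with ⟨hx, _⟩ | ⟨hx, _⟩
    · exact hh_ray.trans_eq (hvanish _ (by linarith))
    · exact hg_ray.trans_eq (hvanish _ (by linarith))

theorem stmt10 (A g h : ℝ → ℝ → ℝ) (C₀' C₀ K : ℝ) (hK : 0 ≤ K) (hC₀ : 0 < C₀)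
    (hA : ContDiff ℝ 1 (fun p : ℝ × ℝ => A p.1 p.2))
    (hg : Continuous (fun p : ℝ × ℝ => g p.1 p.2))
    (hh : Continuous (fun p : ℝ × ℝ => h p.1 p.2))
    (pde1 : ∀ t x : ℝ, deriv (fun s => A s x) t + deriv (fun y => A t y) x = - g t x)
    (pde2 : ∀ t x : ℝ, deriv (fun s => A s x) t - deriv (fun y => A t y) x = - h t x)
    (h0 : ∀ y : ℝ, |A 0 y| ≤ C₀')
    (hgK : ∀ t ≥ (0:ℝ), ∀ x : ℝ, (∫ τ in (0:ℝ)..t, (g τ (x - t + τ))^2) ≤ K)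
    (hhK : ∀ t ≥ (0:ℝ), ∀ x : ℝ, (∫ τ in (0:ℝ)..t, (h τ (x + t - τ))^2) ≤ K)
    (hgsupp : ∀ τ ≥ (0:ℝ), ∀ y : ℝ, C₀ + τ ≤ |y| → g τ y = 0)
    (hhsupp : ∀ τ ≥ (0:ℝ), ∀ y : ℝ, C₀ + τ ≤ |y| → h τ y = 0) :
    ∀ t ≥ (0:ℝ), ∀ x : ℝ,
      (|x| < C₀ + t →
        |A t x| ≤ C₀' + Real.sqrt K * Real.sqrt (min (min (t + x + C₀) (t - x + C₀)) t)) ∧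
      (C₀ + t ≤ |x| → |A t x| ≤ C₀') :=
  stmt10_general A g h C₀' C₀ K hA hg hh pde1 pde2 h0 hgK hhK hgsupp hhsupp
end

section
/- Let V1, V2 : [t-Δ, t] → ℝ with V1(s) ≥ V/2 > 0 and V2(s)² ≤ C(1 + K) for all s, where K ≥ 0, and let X solve X'(s) = V1(s)/sqrt(m² + V1(s)² + V2(s)²) with m > 0. Define X_C(s) = X(t) + s - t. Then |X_C(s) - X(s)| ≤ C'·Δ·(1 + K)/V² for all s ∈ [t-Δ, t], with C' depending only on C and m. -/
set_option maxHeartbeats 1000000 in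
theorem stmt13 (C m : ℝ) (hC : 0 < C) (hm : 0 < m) :
    ∃ C' > 0, ∀ (V1 V2 X : ℝ → ℝ) (t Δ V K : ℝ), 0 < Δ → Δ ≤ t → 0 < V → 0 ≤ K →
      (∀ s ∈ Set.Icc (t - Δ) t, V / 2 ≤ V1 s) →
      (∀ s ∈ Set.Icc (t - Δ) t, (V2 s)^2 ≤ C * (1 + K)) →
      (∀ s ∈ Set.Icc (t - Δ) t,
        HasDerivAt X (V1 s / Real.sqrt (m^2 + (V1 s)^2 + (V2 s)^2)) s) →
      ∀ s ∈ Set.Icc (t - Δ) t,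
        |(X t + s - t) - X s| ≤ C' * Δ * (1 + K) / V^2 := by
  refine ⟨4 * (m ^ 2 + C), by positivity, ?_⟩
  intro V1 V2 X t Δ V K hΔ hΔt hV hK hV1 hV2 hX s hs
  set B : ℝ := 4 * (m ^ 2 + C) * (1 + K) / V ^ 2 with hB
  have hBnn : 0 ≤ B := by positivity
  -- derivative bound for f = X - id
  have key : ∀ σ ∈ Set.Icc (t - Δ) t,
      ‖V1 σ / Real.sqrt (m ^ 2 + (V1 σ) ^ 2 + (V2 σ) ^ 2) - 1‖ ≤ B := by
    intro σ hσ
    set a := V1 σ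
    set b := V2 σ
    have ha : V / 2 ≤ a := hV1 σ hσ
    have ha0 : 0 < a := lt_of_lt_of_le (by positivity) ha
    have hsum : (0:ℝ) < m ^ 2 + a ^ 2 + b ^ 2 := by positivity
    set r := Real.sqrt (m ^ 2 + a ^ 2 + b ^ 2) with hr
    have hr0 : 0 < r := Real.sqrt_pos.mpr hsum
    have hr2 : r ^ 2 = m ^ 2 + a ^ 2 + b ^ 2 := Real.sq_sqrt hsum.le
    have hra : a ≤ r := by
      nlinarith [sq_nonneg (r - a), sq_nonneg b]
    have hle1 : a / r ≤ 1 := (div_le_one hr0).mpr hra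
    have heq : 1 - a / r = (m ^ 2 + b ^ 2) / (r * (r + a)) := by
      rw [eq_div_iff (by positivity)]
      field_simp
      nlinarith [hr2]
    have h1 : 1 - a / r ≤ (m ^ 2 + b ^ 2) / a ^ 2 := by
      rw [heq]
      apply div_le_div_of_nonneg_left (by positivity) (by positivity)
      nlinarith
    have h2 : (m ^ 2 + b ^ 2) / a ^ 2 ≤ B := by
      rw [hB, div_le_div_iff₀ (by positivity) (by positivity)]
      have hb2 : b ^ 2 ≤ C * (1 + K) := hV2 σ hσ
      have hVa : (V / 2) ^ 2 ≤ a ^ 2 := by nlinarith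
      have hfac : m ^ 2 + b ^ 2 ≤ (m ^ 2 + C) * (1 + K) := by
        nlinarith [mul_nonneg (sq_nonneg m) hK]
      nlinarith [mul_le_mul_of_nonneg_left hVa
          (show (0:ℝ) ≤ 4 * (m ^ 2 + C) * (1 + K) by positivity),
        mul_le_mul_of_nonneg_right hfac (sq_nonneg V)]
    have : ‖a / r - 1‖ = 1 - a / r := by
      rw [Real.norm_eq_abs, abs_sub_comm, abs_of_nonneg (by linarith)]
    rw [this]
    linarith
  have hderiv : ∀ σ ∈ Set.Icc (t - Δ) t,
      HasDerivWithinAt (fun u => X u - u)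
        (V1 σ / Real.sqrt (m ^ 2 + (V1 σ) ^ 2 + (V2 σ) ^ 2) - 1) (Set.Icc (t - Δ) t) σ := by
    intro σ hσ
    exact ((hX σ hσ).sub (hasDerivAt_id σ)).hasDerivWithinAt
  have ht : t ∈ Set.Icc (t - Δ) t := ⟨by linarith, le_refl t⟩
  have hmain := (convex_Icc (t - Δ) t).norm_image_sub_le_of_norm_hasDerivWithin_le
    hderiv key hs ht
  have hts : ‖t - s‖ ≤ Δ := by
    rw [Real.norm_eq_abs, abs_of_nonneg (by linarith [hs.2])]
    linarith [hs.1]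
  have : |(X t + s - t) - X s| ≤ B * Δ := by
    have heq : (X t + s - t) - X s = (X t - t) - (X s - s) := by ring
    rw [heq]
    calc |(X t - t) - (X s - s)| ≤ B * ‖t - s‖ := hmain
      _ ≤ B * Δ := by exact mul_le_mul_of_nonneg_left hts hBnn
  calc |(X t + s - t) - X s| ≤ B * Δ := this
    _ = 4 * (m ^ 2 + C) * Δ * (1 + K) / V ^ 2 := by rw [hB]; ring
end

section
/- Let E₁, B : ℝ → ℝ be continuous with B(x)² ≤ E₁(x)² and E₁(x) ≥ 0 on an interval [a,b]. Let X, V = (V1, V2) solve X' = V1/sqrt(m²+|V|²), V1' = e(E₁(X) + V̂2 B(X)), with e > 0, m > 0, V̂2 = V2/sqrt(m²+|V|²), initial data X(0) = d ∈ (a,b), V1(0) = w1 > 0. Then as long as X(s) ∈ [a,b], V1 is nondecreasing, V1(s) ≥ w1 > 0, and there is a finite time T > 0 with X(T) = b. -/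
theorem stmt15 (E₁ B : ℝ → ℝ) (a b d w1 e m : ℝ) (X V1 V2 : ℝ → ℝ)
    (hE₁c : Continuous E₁) (hBc : Continuous B) (hV2c : Continuous V2)
    (hV2b : ∃ Mb : ℝ, ∀ s : ℝ, |V2 s| ≤ Mb)
    (hab : a < b) (hd : d ∈ Set.Ioo a b) (he : 0 < e) (hm : 0 < m) (hw : 0 < w1)
    (hBE : ∀ x ∈ Set.Icc a b, (B x)^2 ≤ (E₁ x)^2)
    (hE₁ : ∀ x ∈ Set.Icc a b, 0 ≤ E₁ x)
    (hX0 : X 0 = d) (hV10 : V1 0 = w1)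
    (hXd : ∀ s ≥ (0:ℝ),
      HasDerivAt X (V1 s / Real.sqrt (m^2 + (V1 s)^2 + (V2 s)^2)) s)
    (hV1d : ∀ s ≥ (0:ℝ),
      HasDerivAt V1 (e * (E₁ (X s) +
        (V2 s / Real.sqrt (m^2 + (V1 s)^2 + (V2 s)^2)) * B (X s))) s) :
    (∀ s ≥ (0:ℝ), (∀ σ ∈ Set.Icc 0 s, X σ ∈ Set.Icc a b) →
      w1 ≤ V1 s ∧ MonotoneOn V1 (Set.Icc 0 s)) ∧
    ∃ T > (0:ℝ), X T = b := by
  obtain ⟨Mb, hMb⟩ := hV2b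
  have hMb0 : 0 ≤ Mb := le_trans (abs_nonneg _) (hMb 0)
  -- positivity of the denominators
  have hDpos : ∀ σ : ℝ, 0 < Real.sqrt (m^2 + (V1 σ)^2 + (V2 σ)^2) := by
    intro σ
    apply Real.sqrt_pos.2
    nlinarith [sq_nonneg (V1 σ), sq_nonneg (V2 σ), sq_nonneg m, hm]
  have hDsq : ∀ σ : ℝ, (Real.sqrt (m^2 + (V1 σ)^2 + (V2 σ)^2))^2
      = m^2 + (V1 σ)^2 + (V2 σ)^2 := by
    intro σ
    apply Real.sq_sqrt
    nlinarith [sq_nonneg (V1 σ), sq_nonneg (V2 σ), sq_nonneg m, hm]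
  -- key monotonicity lemma
  have key : ∀ s : ℝ, 0 ≤ s → (∀ σ ∈ Set.Icc (0:ℝ) s, X σ ∈ Set.Icc a b) →
      MonotoneOn V1 (Set.Icc 0 s) := by
    intro s hs hX
    apply monotoneOn_of_deriv_nonneg (convex_Icc 0 s)
    · intro σ hσ
      exact ((hV1d σ hσ.1).continuousAt).continuousWithinAt
    · intro σ hσ
      rw [interior_Icc] at hσ
      exact ((hV1d σ hσ.1.le).differentiableAt).differentiableWithinAt
    · intro σ hσ
      rw [interior_Icc] at hσ
      have hσ0 : (0:ℝ) ≤ σ := hσ.1.le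
      rw [(hV1d σ hσ0).deriv]
      have hXσ : X σ ∈ Set.Icc a b := hX σ ⟨hσ0, hσ.2.le⟩
      have hE : 0 ≤ E₁ (X σ) := hE₁ _ hXσ
      have hB : (B (X σ))^2 ≤ (E₁ (X σ))^2 := hBE _ hXσ
      set v := V2 σ / Real.sqrt (m^2 + (V1 σ)^2 + (V2 σ)^2) with hv
      have hv2 : v^2 ≤ 1 := by
        rw [hv, div_pow, hDsq σ]
        rw [div_le_one (by nlinarith [sq_nonneg (V1 σ), sq_nonneg (V2 σ), hm])]
        nlinarith [sq_nonneg (V1 σ), sq_nonneg m, hm]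
      have hcore : 0 ≤ E₁ (X σ) + v * B (X σ) := by
        nlinarith [sq_nonneg (E₁ (X σ) + v * B (X σ)), sq_nonneg (E₁ (X σ) - v * B (X σ)),
          sq_nonneg (B (X σ)), sq_nonneg v, sq_nonneg (v * B (X σ))]
      positivity
  have keyge : ∀ s : ℝ, 0 ≤ s → (∀ σ ∈ Set.Icc (0:ℝ) s, X σ ∈ Set.Icc a b) →
      ∀ σ ∈ Set.Icc (0:ℝ) s, w1 ≤ V1 σ := by
    intro s hs hX σ hσ
    have hmono := key σ hσ.1 (fun τ hτ => hX τ ⟨hτ.1, le_trans hτ.2 hσ.2⟩)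
    have := hmono (Set.left_mem_Icc.2 hσ.1) (Set.right_mem_Icc.2 hσ.1) hσ.1
    rwa [hV10] at this
  -- speed lower bound
  set K : ℝ := Real.sqrt (m^2 + w1^2 + Mb^2) with hK
  have hKpos : 0 < K := Real.sqrt_pos.2 (by nlinarith)
  set c : ℝ := w1 / K with hc
  have hcpos : 0 < c := div_pos hw hKpos
  have hrate : ∀ σ : ℝ, w1 ≤ V1 σ →
      c ≤ V1 σ / Real.sqrt (m^2 + (V1 σ)^2 + (V2 σ)^2) := by
    intro σ hV
    have hVpos : 0 < V1 σ := lt_of_lt_of_le hw hV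
    rw [hc, div_le_div_iff₀ hKpos (hDpos σ)]
    have hu2 : (V2 σ)^2 ≤ Mb^2 := by
      have := hMb σ
      nlinarith [abs_nonneg (V2 σ), sq_abs (V2 σ)]
    have h1 : w1 * Real.sqrt (m^2 + (V1 σ)^2 + (V2 σ)^2)
        = Real.sqrt (w1^2 * (m^2 + (V1 σ)^2 + (V2 σ)^2)) := by
      rw [Real.sqrt_mul (sq_nonneg w1), Real.sqrt_sq hw.le]
    have h2 : V1 σ * K = Real.sqrt ((V1 σ)^2 * (m^2 + w1^2 + Mb^2)) := by
      rw [Real.sqrt_mul (sq_nonneg (V1 σ)), Real.sqrt_sq hVpos.le, hK]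
    rw [h1, h2]
    apply Real.sqrt_le_sqrt
    have hw2 : w1^2 ≤ (V1 σ)^2 := by nlinarith
    have hf1 : w1^2 * (V2 σ)^2 ≤ (V1 σ)^2 * Mb^2 :=
      mul_le_mul hw2 hu2 (sq_nonneg (V2 σ)) (sq_nonneg (V1 σ))
    have hf2 : w1^2 * m^2 ≤ (V1 σ)^2 * m^2 :=
      mul_le_mul_of_nonneg_right hw2 (sq_nonneg m)
    nlinarith [hf1, hf2]
  -- growth lemma
  have hgrow : ∀ s₁ : ℝ, 0 ≤ s₁ → (∀ σ ∈ Set.Icc (0:ℝ) s₁, w1 ≤ V1 σ) →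
      d + c * s₁ ≤ X s₁ := by
    intro s₁ hs₁ hV
    have hg : MonotoneOn (fun σ => X σ - c * σ) (Set.Icc 0 s₁) := by
      apply monotoneOn_of_deriv_nonneg (convex_Icc 0 s₁)
      · intro σ hσ
        exact (((hXd σ hσ.1).continuousAt).sub (continuous_const.mul continuous_id).continuousAt).continuousWithinAt
      · intro σ hσ
        rw [interior_Icc] at hσ
        exact (((hXd σ hσ.1.le).sub ((hasDerivAt_id σ).const_mul c)).differentiableAt).differentiableWithinAt
      · intro σ hσ
        rw [interior_Icc] at hσ
        have hder : HasDerivAt (fun σ => X σ - c * σ)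
            (V1 σ / Real.sqrt (m^2 + (V1 σ)^2 + (V2 σ)^2) - c * 1) σ :=
          (hXd σ hσ.1.le).sub ((hasDerivAt_id σ).const_mul c)
        rw [hder.deriv]
        have := hrate σ (hV σ ⟨hσ.1.le, hσ.2.le⟩)
        linarith
    have := hg (Set.left_mem_Icc.2 hs₁) (Set.right_mem_Icc.2 hs₁) hs₁
    simp only [hX0, mul_zero, sub_zero] at this
    linarith
  constructor
  · intro s hs hX
    refine ⟨keyge s hs hX s (Set.right_mem_Icc.2 hs), key s hs hX⟩
  -- escape
  by_contra hcon
  push_neg at hcon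
  set T₀ : ℝ := (b - d) / c with hT₀def
  have hT₀pos : 0 < T₀ := div_pos (by linarith [hd.2]) hcpos
  have hXcont : ∀ σ : ℝ, 0 ≤ σ → ContinuousAt X σ := fun σ hσ => (hXd σ hσ).continuousAt
  have hlt : ∀ σ ∈ Set.Icc (0:ℝ) T₀, X σ < b := by
    intro σ hσ
    by_contra hge
    push_neg at hge
    have hconX : ContinuousOn X (Set.Icc 0 σ) :=
      fun τ hτ => (hXcont τ hτ.1).continuousWithinAt
    have := intermediate_value_Icc hσ.1 hconX
    have hbmem : b ∈ Set.Icc (X 0) (X σ) := by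
      rw [hX0]; exact ⟨hd.2.le, hge⟩
    obtain ⟨τ, hτmem, hτ⟩ := this hbmem
    have hτpos : 0 < τ := by
      rcases eq_or_lt_of_le hτmem.1 with h | h
      · exfalso; rw [← h, hX0] at hτ; exact absurd hτ (ne_of_lt hd.2)
      · exact h
    exact hcon τ hτpos hτ
  set A : Set ℝ := {s | s ∈ Set.Icc (0:ℝ) T₀ ∧ ∀ σ ∈ Set.Icc (0:ℝ) s, X σ ∈ Set.Icc a b}
    with hA
  have h0A : (0:ℝ) ∈ A := by
    refine ⟨⟨le_refl 0, hT₀pos.le⟩, ?_⟩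
    intro σ hσ
    have : σ = 0 := le_antisymm hσ.2 hσ.1
    rw [this, hX0]
    exact ⟨hd.1.le, hd.2.le⟩
  have hbdd : BddAbove A := ⟨T₀, fun s hs => hs.1.2⟩
  set s₁ : ℝ := sSup A with hs₁def
  have hs₁0 : 0 ≤ s₁ := le_csSup hbdd h0A
  have hs₁T : s₁ ≤ T₀ := csSup_le ⟨0, h0A⟩ (fun s hs => hs.1.2)
  have hIco : ∀ σ ∈ Set.Ico (0:ℝ) s₁, X σ ∈ Set.Icc a b := by
    intro σ hσ
    obtain ⟨s, hsA, hσs⟩ := exists_lt_of_lt_csSup ⟨0, h0A⟩ hσ.2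
    exact hsA.2 σ ⟨hσ.1, hσs.le⟩
  have hmemtop : X s₁ ∈ Set.Icc a b := by
    rcases eq_or_lt_of_le hs₁0 with h0 | h0
    · rw [← h0, hX0]; exact ⟨hd.1.le, hd.2.le⟩
    · haveI hne : (nhdsWithin s₁ (Set.Ico 0 s₁)).NeBot := by
        rw [← mem_closure_iff_nhdsWithin_neBot, closure_Ico (ne_of_lt h0)]
        exact ⟨hs₁0, le_refl s₁⟩
      have htend : Filter.Tendsto X (nhdsWithin s₁ (Set.Ico 0 s₁)) (nhds (X s₁)) :=
        (hXcont s₁ hs₁0).continuousWithinAt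
      exact isClosed_Icc.mem_of_tendsto htend
        (Filter.eventually_of_mem self_mem_nhdsWithin (fun τ hτ => hIco τ hτ))
  have hmem : ∀ σ ∈ Set.Icc (0:ℝ) s₁, X σ ∈ Set.Icc a b := by
    intro σ hσ
    rcases lt_or_eq_of_le hσ.2 with h | h
    · exact hIco σ ⟨hσ.1, h⟩
    · rw [h]; exact hmemtop
  have hV1ge : ∀ σ ∈ Set.Icc (0:ℝ) s₁, w1 ≤ V1 σ := keyge s₁ hs₁0 hmem
  have hXs₁ : d + c * s₁ ≤ X s₁ := hgrow s₁ hs₁0 hV1ge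
  have hs₁eq : s₁ = T₀ := by
    by_contra hne'
    have hs₁lt : s₁ < T₀ := lt_of_le_of_ne hs₁T hne'
    have hXlt : X s₁ < b := hlt s₁ ⟨hs₁0, hs₁T⟩
    have hXgt : a < X s₁ := by nlinarith [hd.1, mul_nonneg hcpos.le hs₁0]
    have hev : ∀ᶠ τ in nhds s₁, X τ ∈ Set.Ioo a b :=
      (hXcont s₁ hs₁0).eventually_mem (isOpen_Ioo.mem_nhds ⟨hXgt, hXlt⟩)
    obtain ⟨ε, hεpos, hε⟩ := Metric.eventually_nhds_iff.1 hev
    set s₂ : ℝ := min (s₁ + ε / 2) T₀ with hs₂def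
    have hs₂gt : s₁ < s₂ := lt_min (by linarith) hs₁lt
    have hs₂A : s₂ ∈ A := by
      constructor
      · exact ⟨le_trans hs₁0 hs₂gt.le, min_le_right _ _⟩
      · intro σ hσ
        rcases le_or_gt σ s₁ with h | h
        · exact hmem σ ⟨hσ.1, h⟩
        · have hd1 : dist σ s₁ < ε := by
            rw [Real.dist_eq, abs_of_pos (by linarith)]
            have : σ ≤ s₁ + ε / 2 := le_trans hσ.2 (min_le_left _ _)
            linarith
          have := hε hd1
          exact ⟨this.1.le, this.2.le⟩
    have := le_csSup hbdd hs₂A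
    linarith
  rw [hs₁eq] at hXs₁
  have : c * T₀ = b - d := by
    rw [hT₀def, mul_div_cancel₀ _ (ne_of_gt hcpos)]
  have := hlt T₀ ⟨hT₀pos.le, le_refl _⟩
  linarith
end

section
/- Let e, m, ℓ : [0,∞) × ℝ → ℝ be C¹ with ∂_t e + ∂_x m = 0 and ∂_t m + ∂_x ℓ = 0, and suppose (e - 2m + ℓ)(τ, C₀ + τ) = 0 for all τ ≥ 0. Then for x₀ < C₀ and all t > 0: ∫_0^t (e - 2m + ℓ)(τ, x₀ + τ) dτ + ∫_{x₀+t}^{C₀+t} (e - m)(t, y) dy = ∫_{x₀}^{C₀} (e - m)(0, y) dy. -/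
/-!
Adding the two conservation laws, the density `e - m` has derivative `∂ₓ(e - 2m + ℓ)` along each
characteristic `y = c + τ`. Hence the mass of `e - m` in the moving window `[x₀ + r, C₀ + r]`
changes at rate `(e - 2m + ℓ)(r, C₀ + r) - (e - 2m + ℓ)(r, x₀ + r)`, the difference of the fluxes
through its two edges; integrating in `r`, the flux through the right edge vanishes.
-/

open Function MeasureTheory Set Metric

section PartialDerivatives

variable {E : Type*} [NormedAddCommGroup E] [NormedSpace ℝ E] {f : ℝ → ℝ → E} {t x c : ℝ}

theorem hasDerivAt_partial_fst (hf : DifferentiableAt ℝ (uncurry f) (t, x)) :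
    HasDerivAt (fun s => f s x) (fderiv ℝ (uncurry f) (t, x) (1, 0)) t := by
  have := hf.hasFDerivAt.comp_hasDerivAt t ((hasDerivAt_id t).prodMk (hasDerivAt_const t x))
  exact this

theorem hasDerivAt_partial_snd (hf : DifferentiableAt ℝ (uncurry f) (t, x)) :
    HasDerivAt (f t) (fderiv ℝ (uncurry f) (t, x) (0, 1)) x :=
  hf.hasFDerivAt.comp_hasDerivAt x ((hasDerivAt_const x t).prodMk (hasDerivAt_id x))

theorem hasDerivAt_deriv_partial_snd (hf : DifferentiableAt ℝ (uncurry f) (t, x)) :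
    HasDerivAt (f t) (deriv (f t) x) x :=
  (hasDerivAt_partial_snd hf).differentiableAt.hasDerivAt

theorem hasDerivAt_along_diagonal (hf : DifferentiableAt ℝ (uncurry f) (t, c + t)) :
    HasDerivAt (fun s => f s (c + s))
      (deriv (fun s => f s (c + t)) t + deriv (f t) (c + t)) t := by
  rw [(hasDerivAt_partial_fst hf).deriv, (hasDerivAt_partial_snd hf).deriv, ← map_add,
    Prod.mk_add_mk, add_zero, zero_add]
  exact hf.hasFDerivAt.comp_hasDerivAt t
    ((hasDerivAt_id t).prodMk ((hasDerivAt_id t).const_add c))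

theorem continuous_deriv_partial_snd (hf : ContDiff ℝ 1 (uncurry f)) :
    Continuous fun p : ℝ × ℝ => deriv (f p.1) p.2 :=
  ((hf.continuous_fderiv one_ne_zero).clm_apply continuous_const).congr fun p =>
    ((hasDerivAt_partial_snd (hf.differentiable one_ne_zero p)).deriv).symm

end PartialDerivatives

section SlantedBalance

variable {E : Type*} [NormedAddCommGroup E] [NormedSpace ℝ E]

theorem hasDerivAt_intervalIntegral_of_continuous {F F' : ℝ → ℝ → E}
    (hF : Continuous (uncurry F)) (hF' : Continuous (uncurry F'))
    (hderiv : ∀ r y, HasDerivAt (F · y) (F' r y) r) (a b s : ℝ) :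
    HasDerivAt (fun r => ∫ y in a..b, F r y) (∫ y in a..b, F' s y) s := by
  obtain ⟨M, hM⟩ := ((isCompact_closedBall s 1).prod (isCompact_uIcc (a := a) (b := b))
    ).exists_bound_of_continuousOn hF'.continuousOn
  refine (intervalIntegral.hasDerivAt_integral_of_dominated_loc_of_deriv_le (bound := fun _ => M)
    (ball_mem_nhds s one_pos) ?_ ?_ ?_ ?_ intervalIntegrable_const ?_).2
  · exact .of_forall fun r => (hF.comp (.prodMk_right r)).aestronglyMeasurable
  · exact (hF.comp (.prodMk_right s)).intervalIntegrable a b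
  · exact (hF'.comp (.prodMk_right s)).aestronglyMeasurable
  · exact .of_forall fun y hy r hr => hM (r, y) ⟨ball_subset_closedBall hr, uIoc_subset_uIcc hy⟩
  · exact .of_forall fun y _ r _ => hderiv r y

variable [CompleteSpace E]

theorem integral_flux_add_integral_window_eq {u v v' : ℝ → ℝ → E}
    (hu : Continuous (uncurry u)) (hv : Continuous (uncurry v)) (hv' : Continuous (uncurry v'))
    (hvy : ∀ s y, HasDerivAt (v s) (v' s y) y)
    (hchar : ∀ c s, HasDerivAt (fun τ => u τ (c + τ)) (v' s (c + s)) s) (a b t : ℝ) :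
    (∫ τ in (0 : ℝ)..t, v τ (a + τ)) + ∫ y in (a + t)..(b + t), u t y
      = (∫ y in a..b, u 0 y) + ∫ τ in (0 : ℝ)..t, v τ (b + τ) := by
  have hshear : Continuous fun p : ℝ × ℝ => (p.1, p.2 + p.1) := by fun_prop
  have hflux : ∀ c r, HasDerivAt (fun r => ∫ τ in (0 : ℝ)..r, v τ (c + τ)) (v r (c + r)) r :=
    fun c r => ((hv.comp (by fun_prop : Continuous fun τ : ℝ => (τ, c + τ))
      ).integral_hasStrictDerivAt 0 r).hasDerivAt
  have hwindow : ∀ r, HasDerivAt (fun r => ∫ y in a..b, u r (y + r))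
      (v r (b + r) - v r (a + r)) r := by
    intro r
    convert hasDerivAt_intervalIntegral_of_continuous (F := fun r y => u r (y + r))
      (F' := fun r y => v' r (y + r)) (hu.comp hshear) (hv'.comp hshear)
      (fun r y => hchar y r) a b r using 1
    rw [intervalIntegral.integral_comp_add_right (v' r),
      intervalIntegral.integral_eq_sub_of_hasDerivAt (fun y _ => hvy r y)
        ((hv'.comp (.prodMk_right r)).intervalIntegrable _ _)]
  have hG : ∀ r, HasDerivAt (fun r => (∫ τ in (0 : ℝ)..r, v τ (a + τ)) +
      (∫ y in a..b, u r (y + r)) - ∫ τ in (0 : ℝ)..r, v τ (b + τ)) 0 r := fun r =>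
    (((hflux a r).add (hwindow r)).sub (hflux b r)).congr_deriv (by abel)
  have hGt :=
    is_const_of_deriv_eq_zero (fun r => (hG r).differentiableAt) (fun r => (hG r).deriv) t 0
  simp only [intervalIntegral.integral_same, add_zero, zero_add, sub_zero] at hGt
  rw [← intervalIntegral.integral_comp_add_right, ← hGt, sub_add_cancel]

end SlantedBalance

theorem hasDerivAt_sub_along_characteristic {e m ℓ : ℝ → ℝ → ℝ}
    (he : Differentiable ℝ (uncurry e)) (hm : Differentiable ℝ (uncurry m))
    (pde1 : ∀ t x : ℝ, deriv (fun s => e s x) t + deriv (m t) x = 0)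
    (pde2 : ∀ t x : ℝ, deriv (fun s => m s x) t + deriv (ℓ t) x = 0) (c s : ℝ) :
    HasDerivAt (fun τ => e τ (c + τ) - m τ (c + τ))
      (deriv (e s) (c + s) - 2 * deriv (m s) (c + s) + deriv (ℓ s) (c + s)) s := by
  refine ((hasDerivAt_along_diagonal (he _)).sub (hasDerivAt_along_diagonal (hm _))).congr_deriv ?_
  linarith [pde1 s (c + s), pde2 s (c + s)]

theorem stmt17_general (e m ℓ : ℝ → ℝ → ℝ) (C₀ x₀ : ℝ)
    (he : ContDiff ℝ 1 (fun p : ℝ × ℝ => e p.1 p.2))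
    (hm : ContDiff ℝ 1 (fun p : ℝ × ℝ => m p.1 p.2))
    (hℓ : ContDiff ℝ 1 (fun p : ℝ × ℝ => ℓ p.1 p.2))
    (pde1 : ∀ t x : ℝ, deriv (fun s => e s x) t + deriv (fun y => m t y) x = 0)
    (pde2 : ∀ t x : ℝ, deriv (fun s => m s x) t + deriv (fun y => ℓ t y) x = 0)
    (hbdry : ∀ τ ≥ (0:ℝ),
      e τ (C₀ + τ) - 2 * m τ (C₀ + τ) + ℓ τ (C₀ + τ) = 0) :
    ∀ t > (0:ℝ),
      (∫ τ in (0:ℝ)..t, (e τ (x₀ + τ) - 2 * m τ (x₀ + τ) + ℓ τ (x₀ + τ))) +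
        (∫ y in (x₀ + t)..(C₀ + t), (e t y - m t y))
        = ∫ y in x₀..C₀, (e 0 y - m 0 y) := by
  intro t ht
  have hd : ∀ {f : ℝ → ℝ → ℝ}, ContDiff ℝ 1 (uncurry f) → Differentiable ℝ (uncurry f) :=
    fun hf => hf.differentiable one_ne_zero
  have hv' : Continuous fun p : ℝ × ℝ =>
      deriv (e p.1) p.2 - 2 * deriv (m p.1) p.2 + deriv (ℓ p.1) p.2 :=
    ((continuous_deriv_partial_snd he).sub
      (continuous_const.mul (continuous_deriv_partial_snd hm))).add
      (continuous_deriv_partial_snd hℓ)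
  have hvy : ∀ s y, HasDerivAt (fun y => e s y - 2 * m s y + ℓ s y)
      (deriv (e s) y - 2 * deriv (m s) y + deriv (ℓ s) y) y := fun s y =>
    ((hasDerivAt_deriv_partial_snd (hd he _)).sub
      ((hasDerivAt_deriv_partial_snd (hd hm _)).const_mul 2)).add
      (hasDerivAt_deriv_partial_snd (hd hℓ _))
  have hbal := integral_flux_add_integral_window_eq (u := fun τ y => e τ y - m τ y)
    (v := fun τ y => e τ y - 2 * m τ y + ℓ τ y)
    (v' := fun τ y => deriv (e τ) y - 2 * deriv (m τ) y + deriv (ℓ τ) y)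
    (he.continuous.sub hm.continuous)
    ((he.continuous.sub (continuous_const.mul hm.continuous)).add hℓ.continuous)
    hv' hvy
    (hasDerivAt_sub_along_characteristic (hd he) (hd hm) pde1 pde2) x₀ C₀ t
  have hinflux : ∫ τ in (0 : ℝ)..t, (e τ (C₀ + τ) - 2 * m τ (C₀ + τ) + ℓ τ (C₀ + τ)) = 0 := by
    rw [intervalIntegral.integral_congr (g := fun _ => 0) fun τ hτ => hbdry τ ?_,
      intervalIntegral.integral_zero]
    rw [uIcc_of_le ht.le] at hτ
    exact hτ.1
  rwa [hinflux, add_zero] at hbal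

theorem stmt17 (e m ℓ : ℝ → ℝ → ℝ) (C₀ x₀ : ℝ) (hx : x₀ < C₀)
    (he : ContDiff ℝ 1 (fun p : ℝ × ℝ => e p.1 p.2))
    (hm : ContDiff ℝ 1 (fun p : ℝ × ℝ => m p.1 p.2))
    (hℓ : ContDiff ℝ 1 (fun p : ℝ × ℝ => ℓ p.1 p.2))
    (pde1 : ∀ t x : ℝ, deriv (fun s => e s x) t + deriv (fun y => m t y) x = 0)
    (pde2 : ∀ t x : ℝ, deriv (fun s => m s x) t + deriv (fun y => ℓ t y) x = 0)
    (hbdry : ∀ τ ≥ (0:ℝ),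
      e τ (C₀ + τ) - 2 * m τ (C₀ + τ) + ℓ τ (C₀ + τ) = 0) :
    ∀ t > (0:ℝ),
      (∫ τ in (0:ℝ)..t, (e τ (x₀ + τ) - 2 * m τ (x₀ + τ) + ℓ τ (x₀ + τ))) +
        (∫ y in (x₀ + t)..(C₀ + t), (e t y - m t y))
        = ∫ y in x₀..C₀, (e 0 y - m 0 y) :=
  stmt17_general e m ℓ C₀ x₀ he hm hℓ pde1 pde2 hbdry
end
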